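/- Let A : 𝓔 → 𝓖 be an a-additive mapping (A additive with A(a·x) = a·A(x) for all x ∈ 𝓔) and let B : 𝓔 × 𝓔 → 𝓖 be a biadditive mapping that is a-biadditive (B(a·x, a·x) = a·B(x,x) and B((1−a)·x, (1−a)·x) = (1−a)·B(x,x) for all x ∈ 𝓔) and orthogonality preserving (⟨x,y⟩ = 0 implies B(x,y) = 0). Then for any c ∈ 𝓖, the mapping f : 𝓔 → 𝓖 defined by f(x) = A(x) + B(x,x) + c is orthogonally a-Jensen. -/

import Mathlib

open scoped RightActions

/-- The Mathlib (December 2024) notion of a Hilbert C⋆-module over `A`, a *right* module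
(action of `Aᵐᵒᵖ`), with its old meaning. -/
class RightCStarModule (A : outParam <| Type*) (E : Type*) [NonUnitalSemiring A] [StarRing A]
    [Module ℂ A] [AddCommGroup E] [Module ℂ E] [PartialOrder A] [SMul Aᵐᵒᵖ E] [Norm A] [Norm E]
    extends Inner A E where
  inner_add_right {x} {y} {z} : inner x (y + z) = inner x y + inner x z
  inner_self_nonneg {x} : 0 ≤ inner x x
  inner_self {x} : inner x x = 0 ↔ x = 0
  inner_op_smul_right {a : A} {x y : E} : inner x (y <• a) = inner x y * a
  inner_smul_right_complex {z : ℂ} {x} {y} : inner x (z • y) = z • inner x y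
  star_inner x y : star (inner x y) = inner y x
  norm_eq_sqrt_norm_inner_self x : ‖x‖ = √‖inner x x‖

variable {A : Type*} [CStarAlgebra A] [PartialOrder A] [StarOrderedRing A]
variable {E : Type*} [NormedAddCommGroup E] [Module ℂ E] [Module Aᵐᵒᵖ E] [RightCStarModule A E]
variable {F : Type*} [NormedAddCommGroup F] [Module ℂ F] [Module Aᵐᵒᵖ F] [RightCStarModule A F]
variable {G : Type*} [NormedAddCommGroup G] [Module ℂ G] [Module Aᵐᵒᵖ G] [RightCStarModule A G]

/-- A mapping `f : E → G` between inner product `A`-modules is *orthogonally `a`-Jensen* if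
`⟪x, y⟫ = 0` implies `f (a·x + (1-a)·y) = a·f x + (1-a)·f y` (module actions written as right
actions `<•`, since `E`, `G` are right `A`-modules). -/
def OrthAJensen (a : A) (f : E → G) : Prop :=
  ∀ x y : E, inner (𝕜 := A) x y = 0 →
    f (x <• a + y <• (1 - a)) = f x <• a + f y <• (1 - a)

/-! Orthogonally `a`-Jensen maps are closed under sums, so it suffices to treat the three summands.
Constants qualify because `a + (1 - a) = 1`, and `A` because additivity upgrades `a`-homogeneity
to `(1 - a)`-homogeneity. For `x ↦ B x x`, orthogonality of `x` and `y` passes to `x·a` and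
`y·(1 - a)`, so both cross terms of `B (x·a + y·(1 - a)) (x·a + y·(1 - a))` vanish and the
`a`-biadditivity of `B` finishes. -/

section RightAction

variable {R M N : Type*} [Ring R] [AddCommGroup M] [Module Rᵐᵒᵖ M] [AddCommGroup N]
  [Module Rᵐᵒᵖ N]

theorem op_smul_add_op_smul_one_sub (z : M) (a : R) : z <• a + z <• (1 - a) = z := by
  rw [← add_smul, ← MulOpposite.op_add, add_sub_cancel, MulOpposite.op_one, one_smul]

theorem op_smul_one_sub (z : M) (a : R) : z <• (1 - a) = z - z <• a :=
  eq_sub_of_add_eq' (op_smul_add_op_smul_one_sub z a)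

theorem map_op_smul_one_sub {T : M → N} (hTadd : ∀ x y, T (x + y) = T x + T y) {a : R}
    (hTa : ∀ x, T (x <• a) = T x <• a) (x : M) : T (x <• (1 - a)) = T x <• (1 - a) := by
  rw [op_smul_one_sub, op_smul_one_sub, ← hTa]
  exact map_sub (AddMonoidHom.mk' T hTadd) x (x <• a)

end RightAction

section RightCStarModule

variable {R M : Type*} [NonUnitalSemiring R] [StarRing R] [Module ℂ R] [PartialOrder R] [Norm R]
  [AddCommGroup M] [Module ℂ M] [SMul Rᵐᵒᵖ M] [Norm M] [RightCStarModule R M]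

theorem RightCStarModule.inner_op_smul_left (x y : M) (b : R) :
    inner (𝕜 := R) (x <• b) y = star b * inner (𝕜 := R) x y := by
  rw [← star_inner y, inner_op_smul_right, star_mul, star_inner]

theorem RightCStarModule.inner_op_smul_op_smul_eq_zero {x y : M} (hxy : inner (𝕜 := R) x y = 0)
    (b c : R) : inner (𝕜 := R) (x <• b) (y <• c) = 0 := by
  rw [inner_op_smul_right, inner_op_smul_left, hxy, mul_zero, zero_mul]

theorem RightCStarModule.inner_eq_zero_symm {x y : M} (hxy : inner (𝕜 := R) x y = 0) :
    inner (𝕜 := R) y x = 0 := by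
  rw [← star_inner, hxy, star_zero]

end RightCStarModule

theorem diag_add_of_cross_eq_zero {M N : Type*} [Add M] [AddCommMonoid N] {B : M → M → N}
    (hBadd₁ : ∀ x y z, B (x + y) z = B x z + B y z)
    (hBadd₂ : ∀ x y z, B x (y + z) = B x y + B x z) {u v : M} (huv : B u v = 0)
    (hvu : B v u = 0) : B (u + v) (u + v) = B u u + B v v := by
  rw [hBadd₁, hBadd₂, hBadd₂, huv, hvu, add_zero, zero_add]

namespace OrthAJensen

variable {R M N : Type*} [CStarAlgebra R] [PartialOrder R] [NormedAddCommGroup M] [Module ℂ M]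
  [Module Rᵐᵒᵖ M] [RightCStarModule R M] [NormedAddCommGroup N] [Module Rᵐᵒᵖ N]

theorem add {a : R} {f g : M → N} (hf : OrthAJensen a f) (hg : OrthAJensen a g) :
    OrthAJensen a (fun x => f x + g x) := by
  intro x y hxy
  dsimp only
  rw [hf x y hxy, hg x y hxy, smul_add, smul_add]
  abel

theorem const (a : R) (c : N) : OrthAJensen (E := M) a (fun _ => c) :=
  fun _ _ _ => (op_smul_add_op_smul_one_sub c a).symm

theorem of_additive {a : R} {T : M → N} (hTadd : ∀ x y, T (x + y) = T x + T y)
    (hTa : ∀ x, T (x <• a) = T x <• a) : OrthAJensen a T := by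
  intro x y _
  rw [hTadd, hTa, map_op_smul_one_sub hTadd hTa]

theorem diag_of_biadditive {a : R} {B : M → M → N}
    (hBadd₁ : ∀ x y z, B (x + y) z = B x z + B y z)
    (hBadd₂ : ∀ x y z, B x (y + z) = B x y + B x z)
    (hBa : ∀ x, B (x <• a) (x <• a) = B x x <• a)
    (hBa' : ∀ x, B (x <• (1 - a)) (x <• (1 - a)) = B x x <• (1 - a))
    (hBorth : ∀ x y, inner (𝕜 := R) x y = 0 → B x y = 0) :
    OrthAJensen a (fun x => B x x) := by
  intro x y hxy
  have horth := RightCStarModule.inner_op_smul_op_smul_eq_zero hxy a (1 - a)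
  dsimp only
  rw [diag_add_of_cross_eq_zero hBadd₁ hBadd₂ (hBorth _ _ horth)
    (hBorth _ _ (RightCStarModule.inner_eq_zero_symm horth)), hBa, hBa']

end OrthAJensen

/-- If `T` is `a`-additive and `B` is `a`-biadditive and orthogonality preserving, then
`x ↦ T x + B x x + c` is orthogonally `a`-Jensen. -/
theorem sum_is_orthAJensen (a : A) (T : E → G) (B : E → E → G) (c : G)
    (hTadd : ∀ x y : E, T (x + y) = T x + T y)
    (hTa : ∀ x : E, T (x <• a) = T x <• a)
    (hBadd₁ : ∀ x y z : E, B (x + y) z = B x z + B y z)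
    (hBadd₂ : ∀ x y z : E, B x (y + z) = B x y + B x z)
    (hBa : ∀ x : E, B (x <• a) (x <• a) = B x x <• a)
    (hBa' : ∀ x : E, B (x <• (1 - a)) (x <• (1 - a)) = B x x <• (1 - a))
    (hBorth : ∀ x y : E, inner (𝕜 := A) x y = 0 → B x y = 0) :
    OrthAJensen a (fun x => T x + B x x + c) :=
  ((OrthAJensen.of_additive hTadd hTa).add
    (OrthAJensen.diag_of_biadditive hBadd₁ hBadd₂ hBa hBa' hBorth)).add (OrthAJensen.const a c)
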